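/- arXiv:1802.01929 — 4 statements merged into one kernel-verified Lean document; each statement's English description precedes it below -/
import Mathlib

section
/- Let d ≥ 2, δ > 0 and N ≥ 1. Define the cut-off force F^N(x) = x / (max(|x|, N^{-δ}))^d. Then there exists a constant C depending only on d such that for all x, y ∈ ℝ^d, |F^N(x) - F^N(y)| ≤ C|x - y|(1/(max(|x|, N^{-δ}))^d + 1/(max(|y|, N^{-δ}))^d). -/
/-- `b^d - a^d ≤ d * b^(d-1) * (b - a)` for `0 ≤ a ≤ b`. -/
lemma pow_sub_pow_le_aux (d : ℕ) (a b : ℝ) (ha : 0 ≤ a) (hab : a ≤ b) :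
    b ^ d - a ^ d ≤ d * b ^ (d - 1) * (b - a) := by
  rw [← geom_sum₂_mul b a d]
  have hb : 0 ≤ b := ha.trans hab
  have hsum : (∑ i ∈ Finset.range d, b ^ i * a ^ (d - 1 - i)) ≤ d * b ^ (d - 1) := by
    calc (∑ i ∈ Finset.range d, b ^ i * a ^ (d - 1 - i))
        ≤ ∑ i ∈ Finset.range d, b ^ (d - 1) := by
          apply Finset.sum_le_sum
          intro i hi
          have hi' : i < d := Finset.mem_range.mp hi
          have : b ^ i * a ^ (d - 1 - i) ≤ b ^ i * b ^ (d - 1 - i) :=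
            mul_le_mul_of_nonneg_left (pow_le_pow_left₀ ha hab _) (pow_nonneg hb i)
          refine this.trans ?_
          rw [← pow_add]
          have : i + (d - 1 - i) = d - 1 := by omega
          rw [this]
      _ = d * b ^ (d - 1) := by
          rw [Finset.sum_const, Finset.card_range, nsmul_eq_mul]
  have hba : 0 ≤ b - a := sub_nonneg.mpr hab
  calc (∑ i ∈ Finset.range d, b ^ i * a ^ (d - 1 - i)) * (b - a)
      ≤ (d * b ^ (d - 1)) * (b - a) := by gcongr
    _ = d * b ^ (d - 1) * (b - a) := rfl

/-- Main estimate in the case `max ‖x‖ r ≤ max ‖y‖ r`. -/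
lemma cutoff_aux (d : ℕ) (r : ℝ) (hr : 0 < r)
    {E : Type*} [NormedAddCommGroup E] [NormedSpace ℝ E] (x y : E)
    (hab : max ‖x‖ r ≤ max ‖y‖ r) :
    ‖((max ‖x‖ r) ^ d)⁻¹ • x - ((max ‖y‖ r) ^ d)⁻¹ • y‖ ≤
      (d + 1) * ‖x - y‖ * (1 / (max ‖x‖ r) ^ d + 1 / (max ‖y‖ r) ^ d) := by
  set a := max ‖x‖ r with ha_def
  set b := max ‖y‖ r with hb_def
  have ha : 0 < a := lt_of_lt_of_le hr (le_max_right _ _)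
  have hb : 0 < b := lt_of_lt_of_le hr (le_max_right _ _)
  have had : (0:ℝ) < a ^ d := pow_pos ha d
  have hbd : (0:ℝ) < b ^ d := pow_pos hb d
  have hyb : ‖y‖ ≤ b := le_max_left _ _
  -- `b - a ≤ ‖x - y‖`
  have hba : b - a ≤ ‖x - y‖ := by
    have h1 : |b - a| ≤ |‖y‖ - ‖x‖| := abs_max_sub_max_le_abs _ _ _
    have h2 : |‖y‖ - ‖x‖| ≤ ‖y - x‖ := abs_norm_sub_norm_le y x
    have h3 : ‖y - x‖ = ‖x - y‖ := norm_sub_rev y x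
    calc b - a ≤ |b - a| := le_abs_self _
      _ ≤ ‖x - y‖ := by rw [← h3]; exact h1.trans h2
  -- decomposition
  have hdecomp : ((a ^ d)⁻¹ : ℝ) • x - ((b ^ d)⁻¹ : ℝ) • y
      = (a ^ d)⁻¹ • (x - y) + ((a ^ d)⁻¹ - (b ^ d)⁻¹) • y := by
    rw [smul_sub, sub_smul]; abel
  rw [hdecomp]
  have hcoef : (0:ℝ) ≤ (a ^ d)⁻¹ - (b ^ d)⁻¹ := by
    have : b ^ d ≥ a ^ d := pow_le_pow_left₀ ha.le hab d
    have h1 : (b ^ d)⁻¹ ≤ (a ^ d)⁻¹ := by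
      apply inv_anti₀ had this
    linarith
  have key : ((a ^ d)⁻¹ - (b ^ d)⁻¹) * ‖y‖ ≤ d * ‖x - y‖ / a ^ d := by
    have hfrac : (a ^ d)⁻¹ - (b ^ d)⁻¹ = (b ^ d - a ^ d) / (a ^ d * b ^ d) := by
      field_simp
    rw [hfrac]
    have hpp : b ^ d - a ^ d ≤ d * b ^ (d - 1) * (b - a) :=
      pow_sub_pow_le_aux d a b ha.le hab
    have hnd : (b ^ d - a ^ d) / (a ^ d * b ^ d) * ‖y‖
        ≤ (d * b ^ (d - 1) * (b - a)) / (a ^ d * b ^ d) * b := by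
      apply mul_le_mul _ hyb (norm_nonneg _)
      · apply div_nonneg _ (by positivity)
        have : a ^ d ≤ b ^ d := pow_le_pow_left₀ ha.le hab d
        linarith
      · apply div_le_div_of_nonneg_right hpp (by positivity) |>.trans_eq rfl
    refine hnd.trans ?_
    have hbd1 : b ^ (d - 1) * b = b ^ d ∨ d = 0 := by
      rcases Nat.eq_zero_or_pos d with h0 | h0
      · right; exact h0
      · left; rw [← pow_succ]; congr 1; omega
    rcases hbd1 with hbd1 | hd0
    · have heq : (d * b ^ (d - 1) * (b - a)) / (a ^ d * b ^ d) * b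
          = d * (b - a) / a ^ d := by
        rw [← hbd1]; field_simp
      rw [heq]
      gcongr
    · simp [hd0]
  calc ‖(a ^ d)⁻¹ • (x - y) + ((a ^ d)⁻¹ - (b ^ d)⁻¹) • y‖
      ≤ ‖(a ^ d)⁻¹ • (x - y)‖ + ‖((a ^ d)⁻¹ - (b ^ d)⁻¹) • y‖ := norm_add_le _ _
    _ = (a ^ d)⁻¹ * ‖x - y‖ + ((a ^ d)⁻¹ - (b ^ d)⁻¹) * ‖y‖ := by
        rw [norm_smul, norm_smul, Real.norm_eq_abs, Real.norm_eq_abs,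
          abs_of_nonneg (inv_nonneg.mpr had.le), abs_of_nonneg hcoef]
    _ ≤ (a ^ d)⁻¹ * ‖x - y‖ + d * ‖x - y‖ / a ^ d := by linarith
    _ ≤ (d + 1) * ‖x - y‖ * (1 / a ^ d + 1 / b ^ d) := by
        have h1 : (a ^ d)⁻¹ * ‖x - y‖ + d * ‖x - y‖ / a ^ d
            = (d + 1) * ‖x - y‖ * (1 / a ^ d) := by field_simp; ring
        rw [h1]
        have : (0:ℝ) ≤ (d + 1) * ‖x - y‖ := by positivity
        nlinarith [mul_nonneg this (le_of_lt (by positivity : (0:ℝ) < 1 / b ^ d))]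

/-- Lipschitz-type estimate for the cut-off Newtonian force
`F^N(x) = x / (max(|x|, N^{-δ}))^d`. -/
theorem cutoff_force_lipschitz_estimate (d : ℕ) (hd : 2 ≤ d) (δ N : ℝ)
    (hδ : 0 < δ) (hN : 1 ≤ N) :
    ∃ C : ℝ, 0 < C ∧
      ∀ x y : EuclideanSpace ℝ (Fin d),
        ‖((max ‖x‖ (N ^ (-δ))) ^ d)⁻¹ • x - ((max ‖y‖ (N ^ (-δ))) ^ d)⁻¹ • y‖ ≤
          C * ‖x - y‖ *
            (1 / (max ‖x‖ (N ^ (-δ))) ^ d + 1 / (max ‖y‖ (N ^ (-δ))) ^ d) := by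
  have hr : (0:ℝ) < N ^ (-δ) := Real.rpow_pos_of_pos (lt_of_lt_of_le one_pos hN) _
  refine ⟨d + 1, by positivity, fun x y => ?_⟩
  rcases le_total (max ‖x‖ (N ^ (-δ))) (max ‖y‖ (N ^ (-δ))) with h | h
  · exact cutoff_aux d (N ^ (-δ)) hr x y h
  · have := cutoff_aux d (N ^ (-δ)) hr y x h
    rw [norm_sub_rev, norm_sub_rev y x, add_comm (1 / (max ‖y‖ (N ^ (-δ))) ^ d)] at this
    exact this
end

section
/- (Osgood-type log-Gronwall lemma) Let C > 0, T > 0, and let f be a nonnegative continuously differentiable function on [0, T] satisfying f'(t) ≤ C f(t)(1 − ln⁻ f(t)) for t ∈ [0, T], where ln⁻ denotes the negative part of the logarithm (so 1 − ln⁻ f = 1 + ln(1/f) when f < 1). If 0 < f(0) < min(exp(1 − e^{CT}), 1), then f(t) ≤ exp(1 − (1 − ln f(0)) e^{-Ct}) for all t ∈ [0, T]. -/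
/-- Osgood-type log-Gronwall lemma: if `f' ≤ C f (1 - ln⁻ f)` on `[0,T]` and
`0 < f 0 < min(exp(1 - e^{CT}), 1)`, then `f t ≤ exp(1 - (1 - ln f 0) e^{-Ct})`. -/
theorem osgood_log_gronwall (C T : ℝ) (hC : 0 < C) (hT : 0 < T) (f f' : ℝ → ℝ)
    (hpos : ∀ t ∈ Set.Icc (0 : ℝ) T, 0 ≤ f t)
    (hderiv : ∀ t ∈ Set.Icc (0 : ℝ) T, HasDerivAt f (f' t) t)
    (hf'cont : ContinuousOn f' (Set.Icc (0 : ℝ) T))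
    (hineq : ∀ t ∈ Set.Icc (0 : ℝ) T,
      f' t ≤ C * f t * (1 - min (Real.log (f t)) 0))
    (h0pos : 0 < f 0)
    (h0small : f 0 < min (Real.exp (1 - Real.exp (C * T))) 1) :
    ∀ t ∈ Set.Icc (0 : ℝ) T,
      f t ≤ Real.exp (1 - (1 - Real.log (f 0)) * Real.exp (-C * t)) := by
  set K : ℝ := 1 - Real.log (f 0) with hKdef
  have hlog : Real.log (f 0) < 1 - Real.exp (C * T) := by
    have h1 : f 0 < Real.exp (1 - Real.exp (C * T)) :=
      lt_of_lt_of_le h0small (min_le_left _ _)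
    calc Real.log (f 0) < Real.log (Real.exp (1 - Real.exp (C * T))) :=
          Real.log_lt_log h0pos h1
      _ = 1 - Real.exp (C * T) := Real.log_exp _
  have hK : Real.exp (C * T) < K := by
    simp only [hKdef]; linarith
  have hKpos : 0 < K := lt_trans (Real.exp_pos _) hK
  -- Step 1: barrier bound for any c with C < c and exp(c*T) < K
  have key : ∀ c : ℝ, C < c → Real.exp (c * T) < K →
      ∀ t ∈ Set.Icc (0 : ℝ) T, f t ≤ Real.exp (1 - K * Real.exp (-c * t)) := by
    intro c hCc hcK
    set B : ℝ → ℝ := fun x => Real.exp (1 - K * Real.exp (-c * x)) with hBdef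
    set B' : ℝ → ℝ := fun x => Real.exp (1 - K * Real.exp (-c * x)) *
      (K * (c * Real.exp (-c * x))) with hB'def
    have hB : ∀ x, HasDerivAt B (B' x) x := by
      intro x
      have h1 : HasDerivAt (fun x : ℝ => -c * x) (-c) x := by
        simpa using (hasDerivAt_id x).const_mul (-c)
      have h2 := h1.exp
      have h3 := (h2.const_mul K).const_sub 1
      have h4 := h3.exp
      convert h4 using 1
      simp only [hB'def]; ring
    have hf : ContinuousOn f (Set.Icc 0 T) := fun x hx =>
      (hderiv x hx).continuousAt.continuousWithinAt
    have hf' : ∀ x ∈ Set.Ico (0 : ℝ) T, HasDerivWithinAt f (f' x) (Set.Ici x) x :=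
      fun x hx => (hderiv x (Set.Ico_subset_Icc_self hx)).hasDerivWithinAt
    have ha : f 0 ≤ B 0 := by
      simp only [hBdef, mul_zero, Real.exp_zero, mul_one, hKdef]
      rw [show (1 : ℝ) - (1 - Real.log (f 0)) = Real.log (f 0) by ring,
        Real.exp_log h0pos]
    have bound : ∀ x ∈ Set.Ico (0 : ℝ) T, f x = B x → f' x < B' x := by
      intro x hx hfx
      have hxIcc : x ∈ Set.Icc (0 : ℝ) T := Set.Ico_subset_Icc_self hx
      have hBx : (0 : ℝ) < B x := Real.exp_pos _
      have hexp : (1 : ℝ) < K * Real.exp (-c * x) := by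
        have h1 : Real.exp (c * T) * Real.exp (-c * x) ≤ K * Real.exp (-c * x) :=
          mul_le_mul_of_nonneg_right hcK.le (Real.exp_pos _).le
        have h2 : (1 : ℝ) ≤ Real.exp (c * T) * Real.exp (-c * x) := by
          rw [← Real.exp_add]
          have : (0 : ℝ) ≤ c * T + -c * x := by nlinarith [hx.2, hx.1, hCc, hC]
          calc (1 : ℝ) = Real.exp 0 := (Real.exp_zero).symm
            _ ≤ _ := Real.exp_le_exp.2 this
        nlinarith [Real.exp_pos (-c * x)]
      have hlogB : Real.log (B x) = 1 - K * Real.exp (-c * x) := Real.log_exp _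
      have hlogBneg : Real.log (B x) < 0 := by rw [hlogB]; linarith
      have h1 : f' x ≤ C * f x * (1 - min (Real.log (f x)) 0) := hineq x hxIcc
      rw [hfx] at h1
      rw [min_eq_left hlogBneg.le, hlogB] at h1
      have h2 : C * B x * (1 - (1 - K * Real.exp (-c * x))) < B' x := by
        simp only [hB'def, hBdef]
        have hKe : (0 : ℝ) < K * Real.exp (-c * x) := by positivity
        have hp := mul_pos (mul_pos (Real.exp_pos (1 - K * Real.exp (-c * x))) hKe)
          (sub_pos.2 hCc)
        nlinarith [hp]
      exact lt_of_le_of_lt h1 h2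
    intro t ht
    exact image_le_of_deriv_right_lt_deriv_boundary hf hf' ha hB bound ht
  -- Step 2: let c → C⁺
  intro t ht
  have hCT : C * T < Real.log K := (Real.lt_log_iff_exp_lt hKpos).2 hK
  have hC0 : C < Real.log K / T := (lt_div_iff₀ hT).2 hCT
  have htend : Filter.Tendsto (fun c : ℝ => Real.exp (1 - K * Real.exp (-c * t)))
      (nhdsWithin C (Set.Ioi C)) (nhds (Real.exp (1 - K * Real.exp (-C * t)))) := by
    apply Filter.Tendsto.mono_left _ nhdsWithin_le_nhds
    exact (Continuous.tendsto (by continuity) C)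
  refine ge_of_tendsto htend ?_
  filter_upwards [Ioo_mem_nhdsGT_of_mem (Set.mem_Ico.2 ⟨le_rfl, hC0⟩)] with c hc
  have hcK : Real.exp (c * T) < K := by
    have h := Real.exp_lt_exp.2 ((lt_div_iff₀ hT).1 hc.2)
    rwa [Real.exp_log hKpos] at h
  exact key c hc.1 hcK t ht
end

section
/- (Uniqueness from log-Lipschitz Gronwall) Let C > 0, T > 0 and f : [0,T] → [0, ∞) be continuously differentiable with f(0) = 0 and f'(t) ≤ C f(t)(1 − ln⁻ f(t)) for all t ∈ [0,T], where ln⁻ is the negative part of ln. Then f(t) = 0 for all t ∈ [0, T]. -/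
open Set Real

theorem osgood_key (C T : ℝ) (hC : 0 < C) (hT : 0 < T) (f f' : ℝ → ℝ)
    (hpos : ∀ t ∈ Set.Icc (0 : ℝ) T, 0 ≤ f t)
    (hderiv : ∀ t ∈ Set.Icc (0 : ℝ) T, HasDerivAt f (f' t) t)
    (hineq : ∀ t ∈ Set.Icc (0 : ℝ) T,
      f' t ≤ C * f t * (1 - min (Real.log (f t)) 0))
    (h0 : f 0 = 0) (a : ℝ) (ha : Real.exp (2 * C * T) ≤ a) :
    ∀ t ∈ Set.Icc (0 : ℝ) T, f t ≤ Real.exp (1 - a * Real.exp (-(2 * C) * t)) := by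
  set K : ℝ := 2 * C with hK
  have hKpos : 0 < K := by positivity
  set B : ℝ → ℝ := fun t => Real.exp (1 - a * Real.exp (-K * t)) with hB
  have ha0 : (0 : ℝ) < a := lt_of_lt_of_le (Real.exp_pos _) ha
  have hB' : ∀ t, HasDerivAt B (a * K * Real.exp (-K * t) * B t) t := by
    intro t
    have h1 : HasDerivAt (fun t : ℝ => -K * t) (-K) t := by
      simpa using (hasDerivAt_id t).const_mul (-K)
    have h2 : HasDerivAt (fun t : ℝ => Real.exp (-K * t)) (Real.exp (-K * t) * (-K)) t :=
      h1.exp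
    have h3 : HasDerivAt (fun t : ℝ => 1 - a * Real.exp (-K * t))
        (0 - a * (Real.exp (-K * t) * (-K))) t :=
      (hasDerivAt_const t (1 : ℝ)).sub (h2.const_mul a)
    have h4 := h3.exp
    convert h4 using 1
    ring
  have hBle1 : ∀ t ∈ Set.Icc (0 : ℝ) T, B t ≤ 1 := by
    intro t ht
    have h1 : Real.exp (K * T) * Real.exp (-K * t) = Real.exp (K * (T - t)) := by
      rw [← Real.exp_add]; ring_nf
    have h2 : (1 : ℝ) ≤ Real.exp (K * (T - t)) := by
      apply Real.one_le_exp
      have := ht.2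
      nlinarith
    have h3 : Real.exp (K * T) * Real.exp (-K * t) ≤ a * Real.exp (-K * t) :=
      mul_le_mul_of_nonneg_right ha (Real.exp_pos _).le
    have : 1 - a * Real.exp (-K * t) ≤ 0 := by
      rw [h1] at h3; linarith
    calc B t ≤ Real.exp 0 := Real.exp_le_exp.mpr this
    _ = 1 := Real.exp_zero
  intro t ht
  refine image_le_of_deriv_right_lt_deriv_boundary
    (f' := f') (B := B) (B' := fun t => a * K * Real.exp (-K * t) * B t)
    ?_ ?_ ?_ ?_ ?_ ht
  · exact fun x hx => (hderiv x hx).continuousAt.continuousWithinAt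
  · exact fun x hx => (hderiv x (Set.Ico_subset_Icc_self hx)).hasDerivWithinAt
  · rw [h0]; exact (Real.exp_pos _).le
  · exact hB'
  · intro x hx hfB
    have hx' : x ∈ Set.Icc (0 : ℝ) T := Set.Ico_subset_Icc_self hx
    have hBx : 0 < B x := Real.exp_pos _
    have hlog : Real.log (B x) = 1 - a * Real.exp (-K * x) := Real.log_exp _
    have hlogle : Real.log (B x) ≤ 0 := Real.log_nonpos hBx.le (hBle1 x hx')
    have h1 : f' x ≤ C * B x * (1 - Real.log (B x)) := by
      have := hineq x hx'
      rw [hfB] at this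
      rwa [min_eq_left hlogle] at this
    have h2 : C * B x * (1 - Real.log (B x)) < K * B x * (1 - Real.log (B x)) := by
      have : 1 ≤ 1 - Real.log (B x) := by linarith
      have hKC : C < K := by rw [hK]; linarith
      have hp : 0 < (K - C) * (B x * (1 - Real.log (B x))) :=
        mul_pos (by linarith) (mul_pos hBx (by linarith))
      nlinarith
    have h3 : a * K * Real.exp (-K * x) * B x = K * B x * (1 - Real.log (B x)) := by
      rw [hlog]; ring
    show f' x < a * K * Real.exp (-K * x) * B x
    rw [h3]
    exact lt_of_le_of_lt h1 h2

/-- Osgood uniqueness criterion: if `f(0) = 0` and `f' ≤ C f (1 - ln⁻ f)` on `[0,T]`,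
then `f ≡ 0` on `[0,T]`. -/
theorem osgood_uniqueness (C T : ℝ) (hC : 0 < C) (hT : 0 < T) (f f' : ℝ → ℝ)
    (hpos : ∀ t ∈ Set.Icc (0 : ℝ) T, 0 ≤ f t)
    (hderiv : ∀ t ∈ Set.Icc (0 : ℝ) T, HasDerivAt f (f' t) t)
    (hf'cont : ContinuousOn f' (Set.Icc (0 : ℝ) T))
    (hineq : ∀ t ∈ Set.Icc (0 : ℝ) T,
      f' t ≤ C * f t * (1 - min (Real.log (f t)) 0))
    (h0 : f 0 = 0) :
    ∀ t ∈ Set.Icc (0 : ℝ) T, f t = 0 := by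
  intro t ht
  refine le_antisymm ?_ (hpos t ht)
  have key : ∀ δ > (0 : ℝ), f t ≤ δ := by
    intro δ hδ
    set c : ℝ := Real.exp (-(2 * C) * t) with hc
    have hcpos : 0 < c := Real.exp_pos _
    set a : ℝ := max (Real.exp (2 * C * T)) ((1 - Real.log δ) / c) with haa
    have h1 : f t ≤ Real.exp (1 - a * c) :=
      osgood_key C T hC hT f f' hpos hderiv hineq h0 a (le_max_left _ _) t ht
    have h2 : (1 - Real.log δ) / c ≤ a := le_max_right _ _
    have h3 : 1 - Real.log δ ≤ a * c := by
      rw [div_le_iff₀ hcpos] at h2; linarith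
    calc f t ≤ Real.exp (1 - a * c) := h1
    _ ≤ Real.exp (Real.log δ) := Real.exp_le_exp.mpr (by linarith)
    _ = δ := Real.exp_log hδ
  have := le_of_forall_pos_le_add (fun ε hε => (key ε hε).trans (by linarith))
  linarith [this]
end

section
/- Let d ≥ 2, δ > 0, N ≥ 1 and define F^N(x) = x/(max(|x|, N^{-δ}))^d and l^N(x) = |x|^{-d} if |x| ≥ d·N^{-δ}, and l^N(x) = N^{dδ} otherwise. Then there exists a constant C depending only on d such that for all x, z ∈ ℝ^d with |z| ≤ (d−1)N^{-δ}, |F^N(x) − F^N(x + z)| ≤ C l^N(x) |z|. -/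
private lemma pow_sub_pow_abs_le (s t : ℝ) (hs : 0 ≤ s) (ht : 0 ≤ t) (n : ℕ) :
    |s ^ n - t ^ n| ≤ (n : ℝ) * max s t ^ (n - 1) * |s - t| := by
  rw [← geom_sum₂_mul s t n, abs_mul]
  refine mul_le_mul_of_nonneg_right ?_ (abs_nonneg _)
  calc |∑ i ∈ Finset.range n, s ^ i * t ^ (n - 1 - i)|
      ≤ ∑ i ∈ Finset.range n, |s ^ i * t ^ (n - 1 - i)| := Finset.abs_sum_le_sum_abs _ _
    _ ≤ ∑ _i ∈ Finset.range n, max s t ^ (n - 1) := by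
        refine Finset.sum_le_sum fun i hi => ?_
        rw [abs_mul, abs_pow, abs_pow, abs_of_nonneg hs, abs_of_nonneg ht]
        have h1 : s ^ i * t ^ (n - 1 - i) ≤ max s t ^ i * max s t ^ (n - 1 - i) := by
          gcongr
          · exact le_max_left _ _
          · exact le_max_right _ _
        refine h1.trans (le_of_eq ?_)
        rw [← pow_add]
        congr 1
        have := Finset.mem_range.mp hi
        omega
    _ = (n : ℝ) * max s t ^ (n - 1) := by
        rw [Finset.sum_const, Finset.card_range, nsmul_eq_mul]

private lemma cutoff_key {E : Type*} [NormedAddCommGroup E] [NormedSpace ℝ E]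
    (d : ℕ) (hd : 1 ≤ d) (r : ℝ) (hr : 0 < r) (a b : E) :
    ‖((max ‖a‖ r) ^ d)⁻¹ • a - ((max ‖b‖ r) ^ d)⁻¹ • b‖ ≤
      ((d : ℝ) + 1) * ((min (max ‖a‖ r) (max ‖b‖ r)) ^ d)⁻¹ * ‖a - b‖ := by
  set s := max ‖a‖ r with hs_def
  set t := max ‖b‖ r with ht_def
  have hs : 0 < s := lt_of_lt_of_le hr (le_max_right _ _)
  have ht : 0 < t := lt_of_lt_of_le hr (le_max_right _ _)
  have hm : 0 < min s t := lt_min hs ht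
  have hsd : (0:ℝ) < s ^ d := pow_pos hs d
  have htd : (0:ℝ) < t ^ d := pow_pos ht d
  have hmd : (0:ℝ) < min s t ^ d := pow_pos hm d
  have hsplit : (s ^ d)⁻¹ • a - (t ^ d)⁻¹ • b
      = (s ^ d)⁻¹ • (a - b) + ((s ^ d)⁻¹ - (t ^ d)⁻¹) • b := by
    rw [smul_sub, sub_smul]; abel
  rw [hsplit]
  have h1 : ‖(s ^ d)⁻¹ • (a - b)‖ ≤ (min s t ^ d)⁻¹ * ‖a - b‖ := by
    rw [norm_smul, Real.norm_eq_abs, abs_of_pos (inv_pos.mpr hsd)]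
    have hps : min s t ^ d ≤ s ^ d := pow_le_pow_left₀ hm.le (min_le_left _ _) d
    exact mul_le_mul_of_nonneg_right (inv_anti₀ hmd hps) (norm_nonneg _)
  have hst : |s - t| ≤ ‖a - b‖ :=
    (abs_max_sub_max_le_abs _ _ _).trans (abs_norm_sub_norm_le a b)
  set M := max s t with hM_def
  have hMpos : 0 < M := lt_of_lt_of_le hs (le_max_left _ _)
  have hpow : |s ^ d - t ^ d| ≤ (d : ℝ) * M ^ (d - 1) * ‖a - b‖ :=
    (pow_sub_pow_abs_le s t hs.le ht.le d).trans
      (mul_le_mul_of_nonneg_left hst (by positivity))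
  have hmul : min s t ^ d * M ^ d = s ^ d * t ^ d := by
    rw [← mul_pow, ← mul_pow, min_mul_max]
  have hMt : M ^ (d - 1) * t ≤ M ^ d := by
    have h1 : M ^ (d - 1) * t ≤ M ^ (d - 1) * M :=
      mul_le_mul_of_nonneg_left (le_max_right s t) (by positivity)
    refine h1.trans (le_of_eq ?_)
    rw [← pow_succ]
    congr 1
    omega
  have hfrac : M ^ (d - 1) * t / (s ^ d * t ^ d) ≤ (min s t ^ d)⁻¹ := by
    rw [div_le_iff₀ (mul_pos hsd htd), ← hmul, inv_mul_cancel_left₀ hmd.ne']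
    exact hMt
  have h2 : ‖((s ^ d)⁻¹ - (t ^ d)⁻¹) • b‖ ≤ (d : ℝ) * (min s t ^ d)⁻¹ * ‖a - b‖ := by
    rw [norm_smul, Real.norm_eq_abs]
    have hdiff : |(s ^ d)⁻¹ - (t ^ d)⁻¹| = |s ^ d - t ^ d| / (s ^ d * t ^ d) := by
      rw [inv_sub_inv hsd.ne' htd.ne', abs_div, abs_of_pos (mul_pos hsd htd),
        abs_sub_comm]
    rw [hdiff]
    have hb : ‖b‖ ≤ t := le_max_left _ _
    calc |s ^ d - t ^ d| / (s ^ d * t ^ d) * ‖b‖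
        ≤ ((d : ℝ) * M ^ (d - 1) * ‖a - b‖) / (s ^ d * t ^ d) * t := by
          gcongr
      _ = (d : ℝ) * ‖a - b‖ * (M ^ (d - 1) * t / (s ^ d * t ^ d)) := by ring
      _ ≤ (d : ℝ) * ‖a - b‖ * (min s t ^ d)⁻¹ := by
          exact mul_le_mul_of_nonneg_left hfrac (by positivity)
      _ = (d : ℝ) * (min s t ^ d)⁻¹ * ‖a - b‖ := by ring
  calc ‖(s ^ d)⁻¹ • (a - b) + ((s ^ d)⁻¹ - (t ^ d)⁻¹) • b‖
      ≤ ‖(s ^ d)⁻¹ • (a - b)‖ + ‖((s ^ d)⁻¹ - (t ^ d)⁻¹) • b‖ := norm_add_le _ _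
    _ ≤ (min s t ^ d)⁻¹ * ‖a - b‖ + (d : ℝ) * (min s t ^ d)⁻¹ * ‖a - b‖ :=
        add_le_add h1 h2
    _ = ((d : ℝ) + 1) * (min s t ^ d)⁻¹ * ‖a - b‖ := by ring

/-- Weak-strong gradient estimate for the cut-off force: `|F^N(x) - F^N(x+z)| ≤ C l^N(x) |z|`
for `|z| ≤ (d-1) N^{-δ}`, where `l^N(x) = |x|^{-d}` if `|x| ≥ d N^{-δ}` and `N^{dδ}` otherwise. -/
theorem cutoff_force_weak_strong_estimate (d : ℕ) (hd : 2 ≤ d) (δ N : ℝ)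
    (hδ : 0 < δ) (hN : 1 ≤ N) :
    ∃ C : ℝ, 0 < C ∧
      ∀ x z : EuclideanSpace ℝ (Fin d), ‖z‖ ≤ ((d : ℝ) - 1) * N ^ (-δ) →
        ‖((max ‖x‖ (N ^ (-δ))) ^ d)⁻¹ • x -
            ((max ‖x + z‖ (N ^ (-δ))) ^ d)⁻¹ • (x + z)‖ ≤
          C * (if (d : ℝ) * N ^ (-δ) ≤ ‖x‖ then ‖x‖ ^ (-(d : ℝ)) else N ^ ((d : ℝ) * δ)) *
            ‖z‖ := by
  have hN0 : (0:ℝ) < N := lt_of_lt_of_le one_pos hN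
  have hr : (0:ℝ) < N ^ (-δ) := Real.rpow_pos_of_pos hN0 _
  have hd1 : (1:ℝ) ≤ (d:ℝ) := by exact_mod_cast (by omega : 1 ≤ d)
  have hdpos : (0:ℝ) < (d:ℝ) := by linarith
  refine ⟨((d : ℝ) + 1) * (d : ℝ) ^ d, by positivity, fun x z hz => ?_⟩
  set r := N ^ (-δ) with hr_def
  set s := max ‖x‖ r with hs_def
  set t := max ‖x + z‖ r with ht_def
  have hkey := cutoff_key d (by omega) r hr x (x + z)
  have hxz : x - (x + z) = -z := by abel
  rw [hxz, norm_neg] at hkey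
  refine hkey.trans ?_
  have hzn : (0:ℝ) ≤ ‖z‖ := norm_nonneg _
  refine mul_le_mul_of_nonneg_right ?_ hzn
  have hm : 0 < min s t := lt_min (lt_of_lt_of_le hr (le_max_right _ _))
    (lt_of_lt_of_le hr (le_max_right _ _))
  split_ifs with h
  · -- far case
    have hx0 : (0:ℝ) < ‖x‖ := lt_of_lt_of_le (by positivity) h
    have hrle : r ≤ ‖x‖ / d := by
      rw [le_div_iff₀ hdpos, mul_comm]; exact h
    have hs_ge : ‖x‖ / d ≤ s :=
      le_trans (div_le_self hx0.le hd1) (le_max_left _ _)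
    have ht_ge : ‖x‖ / d ≤ t := by
      have h1 : ‖x‖ - ‖z‖ ≤ ‖x + z‖ := by
        have := norm_sub_le (x + z) z
        simpa using this
      have h2 : ‖z‖ ≤ ((d:ℝ) - 1) * (‖x‖ / d) :=
        hz.trans (mul_le_mul_of_nonneg_left hrle (by linarith))
      have h3 : ‖x‖ - ((d:ℝ) - 1) * (‖x‖ / d) = ‖x‖ / d := by
        field_simp; ring
      have : ‖x‖ / d ≤ ‖x + z‖ := by linarith
      exact this.trans (le_max_left _ _)
    have hmin_ge : ‖x‖ / d ≤ min s t := le_min hs_ge ht_ge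
    have hxd : ((‖x‖ / d) ^ d) ≤ min s t ^ d :=
      pow_le_pow_left₀ (by positivity) hmin_ge d
    have hinv : (min s t ^ d)⁻¹ ≤ ((‖x‖ / d) ^ d)⁻¹ :=
      inv_anti₀ (by positivity) hxd
    have heq : ((‖x‖ / d) ^ d)⁻¹ = (d:ℝ) ^ d * (‖x‖ ^ d)⁻¹ := by
      rw [div_pow, inv_div, div_eq_mul_inv]
    have hrpow : ‖x‖ ^ (-(d:ℝ)) = (‖x‖ ^ d)⁻¹ := by
      rw [Real.rpow_neg hx0.le, Real.rpow_natCast]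
    rw [hrpow]
    calc ((d:ℝ) + 1) * (min s t ^ d)⁻¹
        ≤ ((d:ℝ) + 1) * ((d:ℝ) ^ d * (‖x‖ ^ d)⁻¹) := by
          rw [← heq]; exact mul_le_mul_of_nonneg_left hinv (by positivity)
      _ = ((d:ℝ) + 1) * (d:ℝ) ^ d * (‖x‖ ^ d)⁻¹ := by ring
  · -- near case
    have hmr : r ≤ min s t := le_min (le_max_right _ _) (le_max_right _ _)
    have hinv : (min s t ^ d)⁻¹ ≤ (r ^ d)⁻¹ :=
      inv_anti₀ (by positivity) (pow_le_pow_left₀ hr.le hmr d)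
    have hrd : (r ^ d)⁻¹ = N ^ ((d:ℝ) * δ) := by
      rw [hr_def, ← Real.rpow_natCast (N ^ (-δ)) d, ← Real.rpow_mul hN0.le,
        ← Real.rpow_neg hN0.le]
      congr 1
      ring
    calc ((d:ℝ) + 1) * (min s t ^ d)⁻¹
        ≤ ((d:ℝ) + 1) * (r ^ d)⁻¹ := mul_le_mul_of_nonneg_left hinv (by positivity)
      _ = ((d:ℝ) + 1) * N ^ ((d:ℝ) * δ) := by rw [hrd]
      _ ≤ ((d:ℝ) + 1) * (d:ℝ) ^ d * N ^ ((d:ℝ) * δ) := by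
          have hdd : (1:ℝ) ≤ (d:ℝ) ^ d := one_le_pow₀ hd1
          have h1 : ((d:ℝ) + 1) ≤ ((d:ℝ) + 1) * (d:ℝ) ^ d :=
            le_mul_of_one_le_right (by positivity) hdd
          exact mul_le_mul_of_nonneg_right h1 (Real.rpow_pos_of_pos hN0 _).le
end
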